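/- arXiv:2101.04517 — 2 statements merged into one kernel-verified Lean document; each statement's English description precedes it below -/
import Mathlib

section
/- In the exterior algebra on generators e₀,...,e_n over ℂ, for 3-element subsets S ≠ T of {0,...,n} with |S ∩ T| ≤ 1, span{e_t ∧ ∂e_S : t ∈ S} ∩ span{e_t ∧ ∂e_T : t ∈ T} = {0}. -/
open ExteriorAlgebra

/-- The generator `e_a` of the exterior algebra `⋀(ℂ^{n+1})`. -/
noncomputable def e (n : ℕ) (a : Fin (n + 1)) : ExteriorAlgebra ℂ (Fin (n + 1) → ℂ) :=
  ι ℂ (Pi.single a (1 : ℂ))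

/-- `∂e_S` for a `3`-set `S = {i < j < k}`. -/
noncomputable def bdry (n : ℕ) (i j k : Fin (n + 1)) : ExteriorAlgebra ℂ (Fin (n + 1) → ℂ) :=
  e n j * e n k - e n i * e n k + e n i * e n j

lemma e_sq (n : ℕ) (a : Fin (n+1)) : e n a * e n a = 0 := ι_sq_zero _

lemma e_swap (n : ℕ) (a b : Fin (n+1)) : e n a * e n b = -(e n b * e n a) :=
  eq_neg_of_add_eq_zero_left (ι_add_mul_swap _ _)

lemma mul_bdry_i (n : ℕ) (i j k : Fin (n+1)) :
    e n i * bdry n i j k = e n i * e n j * e n k := by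
  unfold bdry
  rw [mul_add, mul_sub, ← mul_assoc, ← mul_assoc, ← mul_assoc, e_sq, zero_mul, zero_mul]
  simp [mul_assoc]

lemma mul_bdry_j (n : ℕ) (i j k : Fin (n+1)) :
    e n j * bdry n i j k = e n i * e n j * e n k := by
  unfold bdry
  rw [mul_add, mul_sub, ← mul_assoc, ← mul_assoc, ← mul_assoc, e_sq, zero_mul,
    e_swap n j i, neg_mul, neg_mul, mul_assoc (e n i) (e n j) (e n j), e_sq, mul_zero]
  simp [mul_assoc]

lemma mul_bdry_k (n : ℕ) (i j k : Fin (n+1)) :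
    e n k * bdry n i j k = e n i * e n j * e n k := by
  unfold bdry
  rw [mul_add, mul_sub, ← mul_assoc, ← mul_assoc, ← mul_assoc, e_swap n k j, e_swap n k i,
    neg_mul, neg_mul, neg_mul, mul_assoc (e n j) (e n k) (e n k),
    mul_assoc (e n i) (e n k) (e n k), e_sq, mul_zero, mul_zero,
    mul_assoc (e n i) (e n k) (e n j), e_swap n k j, mul_neg]
  simp [mul_assoc]

/-- The alternating 3-form given by the determinant of the `(a,b,c)`-coordinates. -/
noncomputable def F (n : ℕ) (a b c : Fin (n+1)) : (Fin (n+1) → ℂ) [⋀^Fin 3]→ₗ[ℂ] ℂ :=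
  (Matrix.detRowAlternating : (Fin 3 → ℂ) [⋀^Fin 3]→ₗ[ℂ] ℂ).compLinearMap
    (LinearMap.pi fun q : Fin 3 => LinearMap.proj (![a, b, c] q))

/-- The induced linear functional on the exterior algebra. -/
noncomputable def φ (n : ℕ) (a b c : Fin (n+1)) :
    ExteriorAlgebra ℂ (Fin (n+1) → ℂ) →ₗ[ℂ] ℂ :=
  liftAlternating (Function.update (fun _ => 0 : ∀ i, (Fin (n+1) → ℂ) [⋀^Fin i]→ₗ[ℂ] ℂ) 3 (F n a b c))

lemma phi_apply (n : ℕ) (a b c x y z : Fin (n+1)) :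
    φ n a b c (e n x * e n y * e n z) =
      (Matrix.of fun p q : Fin 3 =>
        (Pi.single (![x, y, z] p) (1:ℂ) : Fin (n+1) → ℂ) (![a, b, c] q)).det := by
  unfold φ e
  rw [mul_assoc, liftAlternating_ι_mul, liftAlternating_ι_mul, liftAlternating_ι]
  have h3 : Function.update (fun _ => 0 : ∀ i, (Fin (n+1) → ℂ) [⋀^Fin i]→ₗ[ℂ] ℂ) 3
      (F n a b c) (Nat.succ 1).succ = F n a b c := Function.update_self _ _ _
  rw [h3]
  simp only [AlternatingMap.curryLeft_apply_apply]
  unfold F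
  rw [AlternatingMap.compLinearMap_apply]
  show Matrix.det (Matrix.of _) = _
  congr 1
  ext p q
  fin_cases p <;> fin_cases q <;>
    simp [Matrix.of_apply, LinearMap.pi_apply, Matrix.vecHead, Matrix.vecTail]

lemma phi_self (n : ℕ) (a b c : Fin (n+1)) (hab : a ≠ b) (hac : a ≠ c) (hbc : b ≠ c) :
    φ n a b c (e n a * e n b * e n c) = 1 := by
  rw [phi_apply, Matrix.det_fin_three]
  simp [Pi.single_apply, hab, hac, hbc, hab.symm, hac.symm, hbc.symm]

lemma phi_other (n : ℕ) (a b c x y z u : Fin (n+1))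
    (hu : u = x ∨ u = y ∨ u = z) (ha : u ≠ a) (hb : u ≠ b) (hc : u ≠ c) :
    φ n a b c (e n x * e n y * e n z) = 0 := by
  rw [phi_apply]
  rcases hu with rfl | rfl | rfl
  · apply Matrix.det_eq_zero_of_row_eq_zero 0
    intro q
    fin_cases q <;> simp [Pi.single_eq_of_ne, ha.symm, hb.symm, hc.symm, Pi.single_apply]
  · apply Matrix.det_eq_zero_of_row_eq_zero 1
    intro q
    fin_cases q <;> simp [Pi.single_eq_of_ne, ha.symm, hb.symm, hc.symm, Pi.single_apply]
  · apply Matrix.det_eq_zero_of_row_eq_zero 2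
    intro q
    fin_cases q <;> simp [Pi.single_eq_of_ne, ha.symm, hb.symm, hc.symm, Pi.single_apply]

/-- For distinct `3`-subsets `S`, `T` of `{0,…,n}` sharing at most one element, the spans of
`{e_t ∧ ∂e_S : t ∈ S}` and `{e_t ∧ ∂e_T : t ∈ T}` intersect trivially. -/
theorem spans_intersect_trivially (n : ℕ) (i₁ j₁ k₁ i₂ j₂ k₂ : Fin (n + 1))
    (h₁ : i₁ < j₁) (h₂ : j₁ < k₁) (h₃ : i₂ < j₂) (h₄ : j₂ < k₂)
    (hne : ({i₁, j₁, k₁} : Finset (Fin (n + 1))) ≠ {i₂, j₂, k₂})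
    (hcap : (({i₁, j₁, k₁} : Finset (Fin (n + 1))) ∩ {i₂, j₂, k₂}).card ≤ 1) :
    Submodule.span ℂ
        ({e n i₁ * bdry n i₁ j₁ k₁, e n j₁ * bdry n i₁ j₁ k₁, e n k₁ * bdry n i₁ j₁ k₁} :
          Set (ExteriorAlgebra ℂ (Fin (n + 1) → ℂ))) ⊓
      Submodule.span ℂ
        ({e n i₂ * bdry n i₂ j₂ k₂, e n j₂ * bdry n i₂ j₂ k₂, e n k₂ * bdry n i₂ j₂ k₂} :
          Set (ExteriorAlgebra ℂ (Fin (n + 1) → ℂ))) = ⊥ := by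
  rw [mul_bdry_i n i₁ j₁ k₁, mul_bdry_j n i₁ j₁ k₁, mul_bdry_k n i₁ j₁ k₁,
    mul_bdry_i n i₂ j₂ k₂, mul_bdry_j n i₂ j₂ k₂, mul_bdry_k n i₂ j₂ k₂]
  set w₁ := e n i₁ * e n j₁ * e n k₁ with hw₁
  set w₂ := e n i₂ * e n j₂ * e n k₂ with hw₂
  have hs1 : ({w₁, w₁, w₁} : Set (ExteriorAlgebra ℂ (Fin (n + 1) → ℂ))) = {w₁} := by simp
  have hs2 : ({w₂, w₂, w₂} : Set (ExteriorAlgebra ℂ (Fin (n + 1) → ℂ))) = {w₂} := by simp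
  rw [hs1, hs2]
  have hcard : ({i₂, j₂, k₂} : Finset (Fin (n + 1))).card = 3 := by
    rw [Finset.card_insert_of_notMem (by simp [h₃.ne, (h₃.trans h₄).ne]),
      Finset.card_insert_of_notMem (by simp [h₄.ne]), Finset.card_singleton]
  have hsub : ¬ (({i₂, j₂, k₂} : Finset (Fin (n + 1))) ⊆ {i₁, j₁, k₁}) := by
    intro hs
    rw [Finset.inter_eq_right.mpr hs, hcard] at hcap
    omega
  obtain ⟨u, huT, huS⟩ := Finset.not_subset.mp hsub
  simp only [Finset.mem_insert, Finset.mem_singleton] at huT huS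
  push_neg at huS
  obtain ⟨hui, huj, huk⟩ := huS
  rw [eq_bot_iff]
  rintro x hx
  rw [Submodule.mem_inf, Submodule.mem_span_singleton, Submodule.mem_span_singleton] at hx
  obtain ⟨⟨c, rfl⟩, d, hd⟩ := hx
  have hv1 : φ n i₁ j₁ k₁ (c • w₁) = c := by
    rw [map_smul, hw₁, phi_self n i₁ j₁ k₁ h₁.ne (h₁.trans h₂).ne h₂.ne, smul_eq_mul, mul_one]
  have hv2 : φ n i₁ j₁ k₁ (c • w₁) = 0 := by
    rw [← hd, map_smul, hw₂, phi_other n i₁ j₁ k₁ i₂ j₂ k₂ u huT hui huj huk, smul_zero]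
  rw [hv2] at hv1
  simp [← hv1]
end

section
/- For the cone of the semiorder arrangement in ℂ^{ℓ+1} (ℓ ≥ 2), consisting of {x₀=0} and {x_i - x_j + x₀ = 0}, {x_i - x_j - x₀ = 0} for 1 ≤ i < j ≤ ℓ: a triple of hyperplanes has linearly dependent defining forms if and only if it is of the form {x₀ = 0}, {x_i - x_j + x₀ = 0}, {x_i - x_j - x₀ = 0} for some i < j. In particular there are exactly C(ℓ,2) dependent triples. -/
/-- The coefficient vector of the linear form `x_i - x_j + x₀` on `ℂ^{ℓ+1}`. -/
def formPlus (ℓ : ℕ) (i j : Fin (ℓ + 1)) : Fin (ℓ + 1) → ℂ :=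
  Pi.single i 1 - Pi.single j 1 + Pi.single 0 1

/-- The coefficient vector of the linear form `x_i - x_j - x₀` on `ℂ^{ℓ+1}`. -/
def formMinus (ℓ : ℕ) (i j : Fin (ℓ + 1)) : Fin (ℓ + 1) → ℂ :=
  Pi.single i 1 - Pi.single j 1 - Pi.single 0 1

/-- The coefficient vector of the linear form `x₀`. -/
def coneForm (ℓ : ℕ) : Fin (ℓ + 1) → ℂ := Pi.single 0 1

/-- The defining forms of the cone of the semiorder arrangement. -/
def coneSemiorderForms (ℓ : ℕ) : Set (Fin (ℓ + 1) → ℂ) :=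
  {f | f = coneForm ℓ ∨
    ∃ i j : Fin (ℓ + 1), 0 < i ∧ i < j ∧ (f = formPlus ℓ i j ∨ f = formMinus ℓ i j)}

/-!
Consider a linear relation among at most three of the forms, all of whose coefficients are
nonzero. A coordinate on which one form of the relation is nonzero must be nonzero on another one.
So for an edge form `x_i - x_j ± x₀` of the relation some other form is nonzero at both `i` and
`j`, i.e. it is the edge form of opposite sign: otherwise one further form covers `i` and another
covers `j`, and eliminating their coefficients through the coordinates `i` and `j` turns
coordinate `0` into a sum of three signs `±1`, which cannot vanish. Hence the relation contains
both `x_i - x_j ± x₀`, nothing on another edge, and also `x₀`, because the two forms of a single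
edge are independent.
-/

open Finset

theorem Finset.exists_ne_apply_ne_zero_of_sum_smul_eq_zero {κ R : Type*} [Semiring R]
    [NoZeroDivisors R] {s : Finset (κ → R)} {g : (κ → R) → R} (h : ∑ f ∈ s, g f • f = 0)
    {f : κ → R} (hf : f ∈ s) (hgf : g f ≠ 0) {k : κ} (hfk : f k ≠ 0) :
    ∃ f' ∈ s, f' ≠ f ∧ f' k ≠ 0 := by
  by_contra! hzero
  have hk := congrFun h k
  simp only [sum_apply, Pi.smul_apply, smul_eq_mul, Pi.zero_apply] at hk
  rw [sum_eq_single f (fun f' hf' hne => by rw [hzero f' hf' hne, mul_zero])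
    (fun h => absurd hf h)] at hk
  exact mul_ne_zero hgf hfk hk

theorem add_add_ne_zero_of_sq_eq_one {K : Type*} [Field K] [CharZero K] {x y z : K}
    (hx : x ^ 2 = 1) (hy : y ^ 2 = 1) (hz : z ^ 2 = 1) : x + y + z ≠ 0 := by
  intro h
  have hxy : 2 * x * y = -1 := by linear_combination (x + y - z) * h + hz - hx - hy
  have : (3 : K) = 0 := by linear_combination (2 * x * y - 1) * hxy - 4 * y ^ 2 * hx - 4 * hy
  exact three_ne_zero this

theorem eq_zero_of_sq_eq_one_of_triangle {K : Type*} [Field K] [CharZero K]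
    {g g₁ g₂ a b c p q r t : K} (ha : a ^ 2 = 1) (hb : b ^ 2 = 1) (hc : c ^ 2 = 1)
    (hp : p ^ 2 = 1) (hq : q ^ 2 = 1) (hr : r ^ 2 = 1) (ht : t ^ 2 = 1)
    (hi : g * a + g₁ * p = 0) (hj : g * b + g₂ * r = 0) (h₀ : g * c + g₁ * q + g₂ * t = 0) :
    g = 0 := by
  have hsq {x y z : K} (hx : x ^ 2 = 1) (hy : y ^ 2 = 1) (hz : z ^ 2 = 1) :
      (-(x * y * z)) ^ 2 = 1 := by
    rw [neg_sq, mul_pow, mul_pow, hx, hy, hz, one_mul, one_mul]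
  have key : g * (c + -(a * p * q) + -(b * r * t)) = 0 := by
    linear_combination h₀ - p * q * hi - r * t * hj + g₁ * q * hp + g₂ * t * hr
  exact (mul_eq_zero.1 key).resolve_right
    (add_add_ne_zero_of_sq_eq_one hc (hsq ha hp hq) (hsq hb hr ht))

theorem linearIndependent_vecCons_iff_linearIndepOn_id {R M : Type*} [Semiring R]
    [AddCommMonoid M] [Module R M] {a b c : M} (hab : a ≠ b) (hac : a ≠ c) (hbc : b ≠ c) :
    LinearIndependent R ![a, b, c] ↔ LinearIndepOn R id ({a, b, c} : Set M) := by
  rw [← linearIndepOn_id_range_iff]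
  · rw [Matrix.range_cons, Matrix.range_cons_cons_empty, Set.singleton_union]
  · intro x y hxy
    fin_cases x <;> fin_cases y <;> simp_all [eq_comm]

theorem Fin.ncard_setOf_pos_fst_lt_snd (ℓ : ℕ) :
    {p : Fin (ℓ + 1) × Fin (ℓ + 1) | 0 < p.1 ∧ p.1 < p.2}.ncard = ℓ.choose 2 := by
  have : {p : Fin (ℓ + 1) × Fin (ℓ + 1) | 0 < p.1 ∧ p.1 < p.2} =
      ↑{p ∈ Ioi (0 : Fin (ℓ + 1)) ×ˢ Ioi (0 : Fin (ℓ + 1)) | p.1 < p.2} := by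
    ext p
    simp only [coe_filter, mem_product, mem_Ioi, Set.mem_ofPred_eq]
    exact ⟨fun h => ⟨⟨h.1, h.1.trans h.2⟩, h.2⟩, fun h => ⟨h.1.1, h.2⟩⟩
  rw [this, Set.ncard_coe_finset, card_product_filter_lt, Fin.card_Ioi]
  simp

namespace ConeSemiorder

variable {ℓ : ℕ} {i j i' j' k : Fin (ℓ + 1)} {f : Fin (ℓ + 1) → ℂ}

theorem coneForm_apply_of_ne_zero (hk : k ≠ 0) : coneForm ℓ k = 0 :=
  Pi.single_eq_of_ne hk _

@[simp]
theorem formPlus_apply_zero (hi : 0 < i) (hij : i < j) : formPlus ℓ i j 0 = 1 := by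
  simp [formPlus, hi.ne, (hi.trans hij).ne]

@[simp]
theorem formMinus_apply_zero (hi : 0 < i) (hij : i < j) : formMinus ℓ i j 0 = -1 := by
  simp [formMinus, hi.ne, (hi.trans hij).ne]

@[simp]
theorem formPlus_apply_left (hi : 0 < i) (hij : i < j) : formPlus ℓ i j i = 1 := by
  simp [formPlus, hij.ne, hi.ne']

@[simp]
theorem formMinus_apply_left (hi : 0 < i) (hij : i < j) : formMinus ℓ i j i = 1 := by
  simp [formMinus, hij.ne, hi.ne']

theorem apply_left_ne_zero (hi : 0 < i) (hij : i < j)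
    (hf : f = formPlus ℓ i j ∨ f = formMinus ℓ i j) : f i ≠ 0 := by
  rcases hf with rfl | rfl <;> simp [hi, hij]

theorem apply_right_ne_zero (hi : 0 < i) (hij : i < j)
    (hf : f = formPlus ℓ i j ∨ f = formMinus ℓ i j) : f j ≠ 0 := by
  rcases hf with rfl | rfl <;> simp [formPlus, formMinus, hij.ne', (hi.trans hij).ne']

theorem eq_or_eq_of_apply_ne_zero (hf : f = formPlus ℓ i j ∨ f = formMinus ℓ i j)
    (hk : k ≠ 0) (hfk : f k ≠ 0) : k = i ∨ k = j := by
  by_contra! hne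
  rcases hf with rfl | rfl <;> simp [formPlus, formMinus, hk, hne.1, hne.2] at hfk

theorem eq_of_apply_ne_zero (hij : i < j) (hf : f = formPlus ℓ i j ∨ f = formMinus ℓ i j)
    (hi' : 0 < i') (hij' : i' < j') (hfi : f i' ≠ 0) (hfj : f j' ≠ 0) : i' = i ∧ j' = j := by
  have h₁ := eq_or_eq_of_apply_ne_zero hf hi'.ne' hfi
  have h₂ := eq_or_eq_of_apply_ne_zero hf (hi'.trans hij').ne' hfj
  omega

theorem apply_zero_ne_zero (hf : f ∈ coneSemiorderForms ℓ) : f 0 ≠ 0 := by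
  rcases hf with rfl | ⟨i, j, hi, hij, rfl | rfl⟩ <;> simp [coneForm, *]

theorem sq_apply_of_ne_zero (hf : f ∈ coneSemiorderForms ℓ) (hfk : f k ≠ 0) : f k ^ 2 = 1 := by
  rcases hf with rfl | ⟨i, j, hi, hij, rfl | rfl⟩ <;>
    simp only [coneForm, formPlus, formMinus, Pi.add_apply, Pi.sub_apply, Pi.single_apply]
      at hfk ⊢ <;>
    split_ifs at hfk ⊢ <;> grind

theorem exists_ne_apply_ne_zero_and_apply_ne_zero {S : Finset (Fin (ℓ + 1) → ℂ)}
    (hS : ↑S ⊆ coneSemiorderForms ℓ) (hcard : #S ≤ 3) {g : (Fin (ℓ + 1) → ℂ) → ℂ}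
    (hrel : ∑ f ∈ S, g f • f = 0) (hg : ∀ f ∈ S, g f ≠ 0) {e : Fin (ℓ + 1) → ℂ} (he : e ∈ S)
    (hei : e i ≠ 0) (hej : e j ≠ 0) : ∃ f ∈ S, f ≠ e ∧ f i ≠ 0 ∧ f j ≠ 0 := by
  by_contra! hno
  obtain ⟨e₁, he₁, he₁e, he₁i⟩ := exists_ne_apply_ne_zero_of_sum_smul_eq_zero hrel he (hg e he) hei
  obtain ⟨e₂, he₂, he₂e, he₂j⟩ := exists_ne_apply_ne_zero_of_sum_smul_eq_zero hrel he (hg e he) hej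
  have he₁j : e₁ j = 0 := hno e₁ he₁ he₁e he₁i
  have he₂i : e₂ i = 0 := by_contra fun h => he₂j (hno e₂ he₂ he₂e h)
  have he₁₂ : e₁ ≠ e₂ := fun h => he₂j (h ▸ he₁j)
  have hSeq : {e, e₁, e₂} = S := eq_of_subset_of_card_le (by simp [insert_subset_iff, *])
    (hcard.trans (card_eq_three.2 ⟨e, e₁, e₂, he₁e.symm, he₂e.symm, he₁₂, rfl⟩).ge)
  have hcoord (k : Fin (ℓ + 1)) : g e * e k + g e₁ * e₁ k + g e₂ * e₂ k = 0 := by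
    have := congrFun hrel k
    rw [← hSeq, sum_insert (by simp [he₁e.symm, he₂e.symm]), sum_pair he₁₂] at this
    simpa [add_assoc] using this
  have hsq {f : Fin (ℓ + 1) → ℂ} (hf : f ∈ S) {k : Fin (ℓ + 1)} (hfk : f k ≠ 0) : f k ^ 2 = 1 :=
    sq_apply_of_ne_zero (hS hf) hfk
  have hsq₀ {f : Fin (ℓ + 1) → ℂ} (hf : f ∈ S) : f 0 ^ 2 = 1 := hsq hf (apply_zero_ne_zero (hS hf))
  have hᵢ := hcoord i
  have hⱼ := hcoord j
  rw [he₂i, mul_zero, add_zero] at hᵢ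
  rw [he₁j, mul_zero, add_zero] at hⱼ
  exact hg e he <| eq_zero_of_sq_eq_one_of_triangle (hsq he hei) (hsq he hej) (hsq₀ he)
    (hsq he₁ he₁i) (hsq₀ he₁) (hsq he₂ he₂j) (hsq₀ he₂) hᵢ hⱼ (hcoord 0)

theorem coneForm_ne_formPlus (hi : 0 < i) (hij : i < j) : coneForm ℓ ≠ formPlus ℓ i j :=
  fun h => apply_left_ne_zero hi hij (.inl h) (coneForm_apply_of_ne_zero hi.ne')

theorem coneForm_ne_formMinus (hi : 0 < i) (hij : i < j) : coneForm ℓ ≠ formMinus ℓ i j :=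
  fun h => apply_left_ne_zero hi hij (.inr h) (coneForm_apply_of_ne_zero hi.ne')

theorem formPlus_ne_formMinus (hi : 0 < i) (hij : i < j) : formPlus ℓ i j ≠ formMinus ℓ i j := by
  intro h
  have := congrFun h 0
  norm_num [hi, hij] at this

theorem card_coneForm_formPlus_formMinus (hi : 0 < i) (hij : i < j) :
    #{coneForm ℓ, formPlus ℓ i j, formMinus ℓ i j} = 3 :=
  card_eq_three.2 ⟨_, _, _, coneForm_ne_formPlus hi hij, coneForm_ne_formMinus hi hij,
    formPlus_ne_formMinus hi hij, rfl⟩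

theorem eq_formPlus_or_formMinus_of_apply_ne_zero (hf : f ∈ coneSemiorderForms ℓ) (hi : 0 < i)
    (hij : i < j) (hfi : f i ≠ 0) (hfj : f j ≠ 0) : f = formPlus ℓ i j ∨ f = formMinus ℓ i j := by
  rcases hf with rfl | ⟨i', j', -, hij', hf⟩
  · exact absurd (coneForm_apply_of_ne_zero hi.ne') hfi
  · obtain ⟨rfl, rfl⟩ := eq_of_apply_ne_zero hij' hf hi hij hfi hfj
    exact hf

theorem coneForm_mem_of_sum_smul_eq_zero {S : Finset (Fin (ℓ + 1) → ℂ)}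
    (hS : ↑S ⊆ coneSemiorderForms ℓ) (hcard : #S ≤ 3) {g : (Fin (ℓ + 1) → ℂ) → ℂ}
    (hrel : ∑ f ∈ S, g f • f = 0) (hg : ∀ f ∈ S, g f ≠ 0) (hi : 0 < i) (hij : i < j)
    (hp : formPlus ℓ i j ∈ S) (hm : formMinus ℓ i j ∈ S) : coneForm ℓ ∈ S := by
  by_contra hc
  by_cases hpair : ∀ h ∈ S, h = formPlus ℓ i j ∨ h = formMinus ℓ i j
  · have hSeq : S = {formPlus ℓ i j, formMinus ℓ i j} :=
      Subset.antisymm (fun h hh => by simpa using hpair h hh) (by simp [insert_subset_iff, *])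
    have hcoord (k : Fin (ℓ + 1)) :
        g (formPlus ℓ i j) * formPlus ℓ i j k + g (formMinus ℓ i j) * formMinus ℓ i j k = 0 := by
      have := congrFun hrel k
      rw [hSeq, sum_pair (formPlus_ne_formMinus hi hij)] at this
      simpa using this
    have hᵢ := hcoord i
    have h₀ := hcoord 0
    simp only [formPlus_apply_left, formMinus_apply_left, formPlus_apply_zero,
      formMinus_apply_zero, hi, hij] at hᵢ h₀
    exact hg _ hp (by linear_combination (hᵢ + h₀) / 2)
  · obtain ⟨h, hh, hhp, hhm⟩ : ∃ h ∈ S, h ≠ formPlus ℓ i j ∧ h ≠ formMinus ℓ i j := by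
      simpa [not_or] using hpair
    obtain ⟨i', j', hi', hij', hh'⟩ := (hS hh).resolve_left fun h' => hc (h' ▸ hh)
    obtain ⟨f, hf, hfh, hfi, hfj⟩ := exists_ne_apply_ne_zero_and_apply_ne_zero hS hcard hrel hg hh
      (apply_left_ne_zero hi' hij' hh') (apply_right_ne_zero hi' hij' hh')
    have hSeq : {formPlus ℓ i j, formMinus ℓ i j, h} = S :=
      eq_of_subset_of_card_le (by simp [insert_subset_iff, *]) (hcard.trans (card_eq_three.2
        ⟨_, _, _, formPlus_ne_formMinus hi hij, hhp.symm, hhm.symm, rfl⟩).ge)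
    have hf' : f = formPlus ℓ i j ∨ f = formMinus ℓ i j := by
      rw [← hSeq] at hf
      simpa [hfh] using hf
    obtain ⟨rfl, rfl⟩ := eq_of_apply_ne_zero hij hf' hi' hij' hfi hfj
    exact hh'.elim hhp hhm

theorem exists_eq_of_sum_smul_eq_zero {S : Finset (Fin (ℓ + 1) → ℂ)}
    (hS : ↑S ⊆ coneSemiorderForms ℓ) (hcard : #S ≤ 3) (hne : S.Nonempty)
    {g : (Fin (ℓ + 1) → ℂ) → ℂ} (hrel : ∑ f ∈ S, g f • f = 0) (hg : ∀ f ∈ S, g f ≠ 0) :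
    ∃ i j, 0 < i ∧ i < j ∧ S = {coneForm ℓ, formPlus ℓ i j, formMinus ℓ i j} := by
  obtain ⟨e, he, hec⟩ : ∃ e ∈ S, e ≠ coneForm ℓ := by
    obtain ⟨f, hf⟩ := hne
    by_cases hfc : f = coneForm ℓ
    · subst hfc
      obtain ⟨e, he, hec, -⟩ := exists_ne_apply_ne_zero_of_sum_smul_eq_zero hrel hf (hg _ hf)
        (k := 0) (by simp [coneForm])
      exact ⟨e, he, hec⟩
    · exact ⟨f, hf, hfc⟩
  obtain ⟨i, j, hi, hij, he'⟩ := (hS he).resolve_left hec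
  obtain ⟨f, hf, hfe, hfi, hfj⟩ := exists_ne_apply_ne_zero_and_apply_ne_zero hS hcard hrel hg he
    (apply_left_ne_zero hi hij he') (apply_right_ne_zero hi hij he')
  have hf' := eq_formPlus_or_formMinus_of_apply_ne_zero (hS hf) hi hij hfi hfj
  have hpm : formPlus ℓ i j ∈ S ∧ formMinus ℓ i j ∈ S := by
    rcases he' with rfl | rfl <;> rcases hf' with rfl | rfl <;> simp_all
  refine ⟨i, j, hi, hij, (eq_of_subset_of_card_le ?_ ?_).symm⟩
  · simp [insert_subset_iff, coneForm_mem_of_sum_smul_eq_zero hS hcard hrel hg hi hij hpm.1 hpm.2,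
      hpm]
  · rwa [card_coneForm_formPlus_formMinus hi hij]

theorem not_linearIndepOn_coneForm_formPlus_formMinus (hi : 0 < i) (hij : i < j) :
    ¬LinearIndepOn ℂ id
      ((({coneForm ℓ, formPlus ℓ i j, formMinus ℓ i j} : Finset _)) : Set (Fin (ℓ + 1) → ℂ)) := by
  push_cast
  rw [linearIndepOn_id_insert (by simp [coneForm_ne_formPlus hi hij, coneForm_ne_formMinus hi hij])]
  refine fun h => h.2 (Submodule.mem_span_pair.2 ⟨1 / 2, -1 / 2, ?_⟩)
  funext k
  simp only [formPlus, formMinus, coneForm, Pi.add_apply, Pi.sub_apply, Pi.smul_apply, smul_eq_mul]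
  ring

theorem not_linearIndepOn_iff {T : Finset (Fin (ℓ + 1) → ℂ)} (hT : ↑T ⊆ coneSemiorderForms ℓ)
    (hcard : #T = 3) :
    ¬LinearIndepOn ℂ id (T : Set (Fin (ℓ + 1) → ℂ)) ↔
      ∃ i j, 0 < i ∧ i < j ∧ T = {coneForm ℓ, formPlus ℓ i j, formMinus ℓ i j} := by
  refine ⟨fun hdep => ?_, fun ⟨i, j, hi, hij, hT⟩ =>
    hT ▸ not_linearIndepOn_coneForm_formPlus_formMinus hi hij⟩
  obtain ⟨g, hrel, f, hf, hgf⟩ := not_linearIndepOn_finset_iff.1 hdep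
  obtain ⟨i, j, hi, hij, hsupp⟩ := exists_eq_of_sum_smul_eq_zero (S := {f ∈ T | g f ≠ 0})
    ((coe_subset.2 (filter_subset _ _)).trans hT) ((card_filter_le _ _).trans hcard.le)
    ⟨f, mem_filter.2 ⟨hf, hgf⟩⟩
    (by rw [sum_filter_of_ne fun f _ h => left_ne_zero_of_smul h]; exact hrel)
    (fun f hf => (mem_filter.1 hf).2)
  refine ⟨i, j, hi, hij, (eq_of_subset_of_card_le (hsupp ▸ filter_subset _ _) ?_).symm⟩
  rw [hcard, card_coneForm_formPlus_formMinus hi hij]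

theorem injOn_coneForm_formPlus_formMinus :
    Set.InjOn (fun p : Fin (ℓ + 1) × Fin (ℓ + 1) =>
      ({coneForm ℓ, formPlus ℓ p.1 p.2, formMinus ℓ p.1 p.2} : Finset (Fin (ℓ + 1) → ℂ)))
      {p | 0 < p.1 ∧ p.1 < p.2} := by
  rintro ⟨i, j⟩ ⟨hi, hij⟩ ⟨i', j'⟩ ⟨hi', hij'⟩
    (h : ({coneForm ℓ, formPlus ℓ i j, formMinus ℓ i j} : Finset _) =
      {coneForm ℓ, formPlus ℓ i' j', formMinus ℓ i' j'})
  have hmem : formPlus ℓ i j ∈ ({coneForm ℓ, formPlus ℓ i' j', formMinus ℓ i' j'} : Finset _) := by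
    rw [← h]
    simp
  have hf : formPlus ℓ i j = formPlus ℓ i' j' ∨ formPlus ℓ i j = formMinus ℓ i' j' := by
    simpa [(coneForm_ne_formPlus hi hij).symm] using hmem
  obtain ⟨rfl, rfl⟩ := eq_of_apply_ne_zero hij' hf hi hij (apply_left_ne_zero hi hij (.inl rfl))
    (apply_right_ne_zero hi hij (.inl rfl))
  rfl

theorem setOf_not_linearIndepOn_eq_image (ℓ : ℕ) :
    {T : Finset (Fin (ℓ + 1) → ℂ) | ↑T ⊆ coneSemiorderForms ℓ ∧ #T = 3 ∧
      ¬LinearIndepOn ℂ id (T : Set (Fin (ℓ + 1) → ℂ))} =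
      (fun p : Fin (ℓ + 1) × Fin (ℓ + 1) =>
        ({coneForm ℓ, formPlus ℓ p.1 p.2, formMinus ℓ p.1 p.2} : Finset (Fin (ℓ + 1) → ℂ))) ''
        {p | 0 < p.1 ∧ p.1 < p.2} := by
  ext T
  constructor
  · rintro ⟨hT, hcard, hdep⟩
    obtain ⟨i, j, hi, hij, rfl⟩ := (not_linearIndepOn_iff hT hcard).1 hdep
    exact ⟨(i, j), ⟨hi, hij⟩, rfl⟩
  · rintro ⟨⟨i, j⟩, ⟨hi, hij⟩, rfl⟩
    refine ⟨?_, card_coneForm_formPlus_formMinus hi hij,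
      not_linearIndepOn_coneForm_formPlus_formMinus hi hij⟩
    simp only [coe_insert, coe_singleton, Set.insert_subset_iff, Set.singleton_subset_iff]
    exact ⟨.inl rfl, .inr ⟨i, j, hi, hij, .inl rfl⟩, .inr ⟨i, j, hi, hij, .inr rfl⟩⟩

end ConeSemiorder

open ConeSemiorder in
theorem coneSemiorder_dependent_triples_general (ℓ : ℕ) :
    (∀ a b c : Fin (ℓ + 1) → ℂ,
      a ∈ coneSemiorderForms ℓ → b ∈ coneSemiorderForms ℓ → c ∈ coneSemiorderForms ℓ →
      a ≠ b → a ≠ c → b ≠ c →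
      (¬LinearIndependent ℂ ![a, b, c] ↔
        ∃ i j : Fin (ℓ + 1), 0 < i ∧ i < j ∧
          ({a, b, c} : Set (Fin (ℓ + 1) → ℂ)) =
            {coneForm ℓ, formPlus ℓ i j, formMinus ℓ i j})) ∧
    {T : Finset (Fin (ℓ + 1) → ℂ) | (T : Set (Fin (ℓ + 1) → ℂ)) ⊆ coneSemiorderForms ℓ ∧ T.card = 3 ∧
        ¬LinearIndependent ℂ (fun x : (T : Set (Fin (ℓ + 1) → ℂ)) => (x : Fin (ℓ + 1) → ℂ))}.ncard
      = ℓ.choose 2 := by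
  refine ⟨fun a b c ha hb hc hab hac hbc => ?_, ?_⟩
  · have h := not_linearIndepOn_iff (T := {a, b, c}) (by simp [Set.insert_subset_iff, *])
      (card_eq_three.2 ⟨a, b, c, hab, hac, hbc, rfl⟩)
    simp only [coe_insert, coe_singleton, ← coe_inj] at h
    rw [linearIndependent_vecCons_iff_linearIndepOn_id hab hac hbc, h]
  · rw [← Fin.ncard_setOf_pos_fst_lt_snd, ← injOn_coneForm_formPlus_formMinus.ncard_image]
    exact congrArg Set.ncard (setOf_not_linearIndepOn_eq_image ℓ)

/-- Three distinct defining forms of the coned semiorder arrangement are linearly dependent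
iff they are `x₀`, `x_i - x_j + x₀`, `x_i - x_j - x₀` for some `i < j`; in particular there
are exactly `C(ℓ,2)` dependent triples. -/
theorem coneSemiorder_dependent_triples (ℓ : ℕ) (hℓ : 2 ≤ ℓ) :
    (∀ a b c : Fin (ℓ + 1) → ℂ,
      a ∈ coneSemiorderForms ℓ → b ∈ coneSemiorderForms ℓ → c ∈ coneSemiorderForms ℓ →
      a ≠ b → a ≠ c → b ≠ c →
      (¬LinearIndependent ℂ ![a, b, c] ↔
        ∃ i j : Fin (ℓ + 1), 0 < i ∧ i < j ∧
          ({a, b, c} : Set (Fin (ℓ + 1) → ℂ)) =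
            {coneForm ℓ, formPlus ℓ i j, formMinus ℓ i j})) ∧
    {T : Finset (Fin (ℓ + 1) → ℂ) | (T : Set (Fin (ℓ + 1) → ℂ)) ⊆ coneSemiorderForms ℓ ∧ T.card = 3 ∧
        ¬LinearIndependent ℂ (fun x : (T : Set (Fin (ℓ + 1) → ℂ)) => (x : Fin (ℓ + 1) → ℂ))}.ncard
      = ℓ.choose 2 :=
  coneSemiorder_dependent_triples_general ℓ
end
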